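/- arXiv:1411.1305 — 6 statements merged into one kernel-verified Lean document; each statement's English description precedes it below -/
import Mathlib

section
/- Let P be a finite poset with a least element. If x ∨ y (the join) exists whenever x and y both cover a common element, and P has a greatest element, then P is a lattice. -/
/-!
Joins of two elements above a common lower bound `a` are built by well-founded induction on `a`
from above: if `a ⋖ x' ≤ x` and `a ⋖ y' ≤ y`, the join `j` of the covers exists by hypothesis,
then `u = x ⊔ j` exists by induction at `x'`, and `u ⊔ y = x ⊔ y` exists by induction at `y'`.
Since `⊥` lies below everything, all binary joins exist; in a finite poset with `⊥` the meet of
`x` and `y` is then the (finite) join of their common lower bounds.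
-/

section

variable {P : Type*} [PartialOrder P]

theorem isLUB_pair_iff {x y j : P} :
    IsLUB {x, y} j ↔ x ≤ j ∧ y ≤ j ∧ ∀ z, x ≤ z → y ≤ z → j ≤ z := by
  simp only [IsLUB, IsLeast, upperBounds_insert, upperBounds_singleton, Set.mem_inter_iff,
    Set.mem_Ici, mem_lowerBounds, and_imp, and_assoc]

theorem isLUB_pair_of_le {x y : P} (hxy : x ≤ y) : IsLUB {x, y} y :=
  isLUB_pair_iff.2 ⟨hxy, le_rfl, fun _ _ hyz => hyz⟩

theorem exists_isLUB_pair_of_le [IsStronglyAtomic P] [WellFoundedGT P]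
    (h : ∀ a x y : P, a ⋖ x → a ⋖ y → ∃ j, IsLUB {x, y} j) :
    ∀ {a x y : P}, a ≤ x → a ≤ y → ∃ j, IsLUB {x, y} j := by
  intro a
  induction a using WellFoundedGT.induction with
  | _ a ih =>
    intro x y hax hay
    obtain hax | rfl := hax.lt_or_eq
    swap
    · exact ⟨y, isLUB_pair_of_le hay⟩
    obtain hay | rfl := hay.lt_or_eq
    swap
    · exact ⟨x, Set.pair_comm _ _ ▸ isLUB_pair_of_le hax.le⟩
    obtain ⟨x', hax', hx'x⟩ := hax.exists_covby_le
    obtain ⟨y', hay', hy'y⟩ := hay.exists_covby_le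
    obtain ⟨j, hj⟩ := h a x' y' hax' hay'
    obtain ⟨hx'j, hy'j, hj_le⟩ := isLUB_pair_iff.1 hj
    obtain ⟨u, hu⟩ := ih x' hax'.lt hx'x hx'j
    obtain ⟨hxu, hju, hu_le⟩ := isLUB_pair_iff.1 hu
    obtain ⟨w, hw⟩ := ih y' hay'.lt (hy'j.trans hju) hy'y
    obtain ⟨huw, hyw, hw_le⟩ := isLUB_pair_iff.1 hw
    refine ⟨w, isLUB_pair_iff.2 ⟨hxu.trans huw, hyw, fun z hxz hyz => ?_⟩⟩
    have hjz : j ≤ z := hj_le z (hx'x.trans hxz) (hy'y.trans hyz)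
    exact hw_le z (hu_le z hxz hjz) hyz

theorem exists_isGLB_pair_of_forall_isLUB_pair [Finite P] [OrderBot P]
    (hsup : ∀ x y : P, ∃ j, IsLUB {x, y} j) (x y : P) : ∃ m, IsGLB {x, y} m := by
  choose sup hsup using hsup
  let _ := SemilatticeSup.ofIsLUB sup hsup
  let s := (Set.toFinite (lowerBounds {x, y})).toFinset
  refine ⟨s.sup id, isLUB_lowerBounds.1 ?_⟩
  simpa [s] using Finset.isLUB_sup_id (s := s)

end

theorem finite_poset_local_joins_lattice_general {P : Type*} [PartialOrder P] [Fintype P]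
    [OrderBot P]
    (h : ∀ a x y : P, a ⋖ x → a ⋖ y → ∃ j, IsLUB {x, y} j) :
    ∀ x y : P, (∃ j, IsLUB {x, y} j) ∧ ∃ m, IsGLB {x, y} m := by
  have hsup : ∀ x y : P, ∃ j, IsLUB {x, y} j := fun _ _ => exists_isLUB_pair_of_le h bot_le bot_le
  exact fun x y => ⟨hsup x y, exists_isGLB_pair_of_forall_isLUB_pair hsup x y⟩

theorem finite_poset_local_joins_lattice {P : Type*} [PartialOrder P] [Fintype P]
    [OrderBot P] [OrderTop P]
    (h : ∀ a x y : P, a ⋖ x → a ⋖ y → ∃ j, IsLUB {x, y} j) :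
    ∀ x y : P, (∃ j, IsLUB {x, y} j) ∧ ∃ m, IsGLB {x, y} m :=
  finite_poset_local_joins_lattice_general h
end

section
/- Let A be a real central hyperplane arrangement with fixed chamber c₀, and order chambers by c ≤ d iff S(c₀,c) ⊆ S(c₀,d). Then this chamber poset is graded with rank function c ↦ |S(c₀,c)|: whenever c < d there is a chamber c' with c ≤ c' ≤ d and |S(c₀,c')| = |S(c₀,c)| + 1; moreover the poset is bounded with minimum c₀ and maximum the chamber −c₀ opposite to c₀. -/
open Matrix
open scoped Classical

/-- Ambient space: `ℝⁿ`. -/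
abbrev V (n : ℕ) := Fin n → ℝ

/-- The linear functional `x ↦ v ⬝ᵥ x` determined by a normal vector. -/
def hypl {n : ℕ} (v : V n) : V n →ₗ[ℝ] ℝ where
  toFun x := v ⬝ᵥ x
  map_add' x y := by simp [dotProduct_add]
  map_smul' c x := by simp [dotProduct_smul]

/-- Two normal vectors define the same hyperplane. -/
def SameHyp {n : ℕ} (u w : V n) : Prop := ∀ x, u ⬝ᵥ x = 0 ↔ w ⬝ᵥ x = 0

/-- A finite set of normal vectors represents a (central) hyperplane arrangement
if each normal is nonzero and distinct normals define distinct hyperplanes. -/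
def IsArrangement {n : ℕ} (A : Finset (V n)) : Prop :=
  (∀ v ∈ A, v ≠ 0) ∧ ∀ u ∈ A, ∀ w ∈ A, SameHyp u w → u = w

/-- The point `x` realizes the sign vector `c` on the arrangement `A`. -/
def Realizes {n : ℕ} (A : Finset (V n)) (c : V n → Bool) (x : V n) : Prop :=
  ∀ v ∈ A, if c v then 0 < v ⬝ᵥ x else v ⬝ᵥ x < 0

/-- A chamber of `A`, encoded by its sign vector. -/
def IsChamber {n : ℕ} (A : Finset (V n)) (c : V n → Bool) : Prop :=
  ∃ x, Realizes A c x

/-- The separation set of two chambers: hyperplanes on which their signs differ. -/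
noncomputable def SepSet {n : ℕ} (A : Finset (V n)) (c d : V n → Bool) : Finset (V n) :=
  A.filter (fun v => c v ≠ d v)

/-- The localization of `A` at the subspace `ker u ∩ ker w`:
hyperplanes containing this subspace. -/
noncomputable def loc {n : ℕ} (A : Finset (V n)) (u w : V n) : Finset (V n) :=
  A.filter (fun v => ∀ x, u ⬝ᵥ x = 0 → w ⬝ᵥ x = 0 → v ⬝ᵥ x = 0)

/-- `u, w` span a codimension-2 intersection subspace `ker u ∩ ker w` of `A`. -/
def Codim2 {n : ℕ} (A : Finset (V n)) (u w : V n) : Prop :=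
  u ∈ A ∧ w ∈ A ∧ LinearIndependent ℝ ![u, w]

/-- `I` is biclosed w.r.t. the chamber `c₀`: its intersection with each rank-2
localization is the separation set of some chamber of the localization. -/
def IsBiclosed {n : ℕ} (A : Finset (V n)) (c₀ : V n → Bool) (I : Finset (V n)) : Prop :=
  ∀ u w, Codim2 A u w →
    ∃ d, IsChamber (loc A u w) d ∧ I ∩ loc A u w = SepSet (loc A u w) c₀ d

/-- `I ⊆ A` is convex with respect to `c₀`. -/
def IsConvex {n : ℕ} (A : Finset (V n)) (c₀ : V n → Bool) (I : Finset (V n)) : Prop :=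
  ∀ H ∈ A \ I, ∃ e, IsChamber A e ∧ H ∈ SepSet A c₀ e ∧ SepSet A c₀ e ⊆ A \ I

/-- `I` is 2-closed: its intersection with each rank-2 localization is convex there. -/
def Is2Closed {n : ℕ} (A : Finset (V n)) (c₀ : V n → Bool) (I : Finset (V n)) : Prop :=
  ∀ u w, Codim2 A u w → IsConvex (loc A u w) c₀ (I ∩ loc A u w)

/-- `v` is a wall of the chamber `c`: some point of the closure of `c` lies on the
hyperplane of `v` and strictly off every other hyperplane of `A`. -/
def IsWall {n : ℕ} (A : Finset (V n)) (c : V n → Bool) (v : V n) : Prop :=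
  v ∈ A ∧ ∃ x, v ⬝ᵥ x = 0 ∧ ∀ w ∈ A, ¬ SameHyp v w →
    (if c w then 0 < w ⬝ᵥ x else w ⬝ᵥ x < 0)

/-- The sign vector `v` is feasible: some point satisfies all its strict constraints. -/
def Feasible {n : ℕ} (A : Finset (V n)) (v : V n → SignType) : Prop :=
  ∃ x : V n, ∀ h ∈ A, (v h = 1 → 0 < h ⬝ᵥ x) ∧ (v h = -1 → h ⬝ᵥ x < 0)

/-- A circuit of `A`: a minimal nonzero infeasible sign vector supported on `A`. -/
def IsCircuit {n : ℕ} (A : Finset (V n)) (v : V n → SignType) : Prop :=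
  (∀ h, v h ≠ 0 → h ∈ A) ∧ (∃ h, v h ≠ 0) ∧ ¬ Feasible A v ∧
    ∀ w : V n → SignType, (∀ h, w h ≠ 0 → w h = v h) →
      {h | w h ≠ 0} ⊂ {h | v h ≠ 0} → Feasible A w

/-- A reduced gallery from `c₀` to `-c₀` in `A`, crossing hyperplanes `H 0, H 1, …`
in order. -/
def IsGallery {n N : ℕ} (A : Finset (V n)) (c₀ : V n → Bool) (H : Fin N → V n)
    (d : Fin (N + 1) → V n → Bool) : Prop :=
  (∀ i, IsChamber A (d i)) ∧ d 0 = c₀ ∧ (∀ v ∈ A, d (Fin.last N) v = !c₀ v) ∧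
    ∀ i : Fin N, SepSet A (d i.castSucc) (d i.succ) = {H i}

/-- The enumeration `H` of `A` is admissible: on every rank-2 localization, the
induced order is the crossing order of some reduced gallery of the localization. -/
def Admissible {n N : ℕ} (A : Finset (V n)) (c₀ : V n → Bool) (H : Fin N → V n) : Prop :=
  ∀ u w, Codim2 A u w →
    ∃ (M : ℕ) (G : Fin M → V n) (e : Fin (M + 1) → V n → Bool) (φ : Fin M → Fin N),
      IsGallery (loc A u w) c₀ G e ∧ StrictMono φ ∧ ∀ k, G k = H (φ k)

/-- The intersection lattice of `A`, as a set of subspaces of `ℝⁿ`. -/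
def InterLattice {n : ℕ} (A : Finset (V n)) : Set (Submodule ℝ (V n)) :=
  {X | ∃ S : Finset (V n), S ⊆ A ∧ X = S.inf (fun v => LinearMap.ker (hypl v))}

/-- A modular element of the intersection lattice of `A`. -/
def IsModular {n : ℕ} (A : Finset (V n)) (X : Submodule ℝ (V n)) : Prop :=
  X ∈ InterLattice A ∧ ∀ Y ∈ InterLattice A, X ⊔ Y ∈ InterLattice A

/-- The rank of the arrangement `A`. -/
noncomputable def rankA {n : ℕ} (A : Finset (V n)) : ℕ :=
  Module.finrank ℝ (Submodule.span ℝ (A : Set (V n)))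

/-- A modular flag: a maximal chain `⊤ = X 0 > X 1 > ⋯ > X r` of modular
elements of the intersection lattice, with `X i` of codimension `i`. -/
def IsModularFlag {n : ℕ} (A : Finset (V n)) (X : Fin (rankA A + 1) → Submodule ℝ (V n)) : Prop :=
  X 0 = ⊤ ∧ (∀ i, IsModular A (X i)) ∧ (∀ i j, i ≤ j → X j ≤ X i) ∧
    ∀ i : Fin (rankA A + 1), Module.finrank ℝ (X i) = n - (i : ℕ)

/-- `A` is supersolvable: its intersection lattice has a modular flag. -/
def IsSupersolvable {n : ℕ} (A : Finset (V n)) : Prop :=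
  ∃ X : Fin (rankA A + 1) → Submodule ℝ (V n), IsModularFlag A X

/-- The chamber `c` is incident to the subspace `X`:  some point of `X` lies in the
closure of `c` and strictly off every hyperplane of `A` not containing `X`. -/
def IncidentSub {n : ℕ} (A : Finset (V n)) (c : V n → Bool) (X : Submodule ℝ (V n)) : Prop :=
  ∃ x, x ∈ X ∧ ∀ v ∈ A, ¬ X ≤ LinearMap.ker (hypl v) →
    (if c v then 0 < v ⬝ᵥ x else v ⬝ᵥ x < 0)

/-- The chamber `c` is incident to the codimension-2 subspace `ker u ∩ ker w`. -/
def IncidentLoc {n : ℕ} (A : Finset (V n)) (c : V n → Bool) (u w : V n) : Prop :=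
  ∃ x, (∀ v ∈ loc A u w, v ⬝ᵥ x = 0) ∧ ∀ v ∈ A, v ∉ loc A u w →
    (if c v then 0 < v ⬝ᵥ x else v ⬝ᵥ x < 0)

/-- `(A, c₀)` is bineighborly: any chamber is incident to the intersection of any two
of its walls separating it from `-c₀`. -/
def Bineighborly {n : ℕ} (A : Finset (V n)) (c₀ : V n → Bool) : Prop :=
  ∀ c, IsChamber A c → ∀ u w, IsWall A c u → IsWall A c w →
    u ∈ SepSet A c (fun v => !c₀ v) → w ∈ SepSet A c (fun v => !c₀ v) → IncidentLoc A c u w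

/-- Every chamber of `A` is a simplicial cone: its walls are linearly independent
and span the same subspace as `A`. -/
def IsSimplicial {n : ℕ} (A : Finset (V n)) : Prop :=
  ∀ c, IsChamber A c →
    LinearIndependent ℝ ((↑) : {v // IsWall A c v} → V n) ∧
      Submodule.span ℝ {v | IsWall A c v} = Submodule.span ℝ (A : Set (V n))

/-! Given chambers `c, d` with `S(c₀,c) ⊂ S(c₀,d)`, walk along the segment from a point `x`
of `c` to a point `y` of `d`. For `x` off finitely many hyperplanes (a dense condition, their
union being Lebesgue-null) the hyperplanes of `S(c,d)` are crossed at pairwise distinct times,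
so just after the first crossing the segment lies in the chamber obtained from `c` by flipping
a single sign `v`. As `S(c₀,c) ⊆ S(c₀,d)`, this `v` lies in `S(c₀,d) \ S(c₀,c)`, and the new
chamber is a cover of `c` below `d`. The opposite chamber is realized by `-x₀`. -/

open MeasureTheory Filter Topology AffineMap

section Generic

variable {n : ℕ}

lemma ae_dotProduct_ne_zero {z : V n} (hz : z ≠ 0) : ∀ᵐ x : V n, z ⬝ᵥ x ≠ 0 := by
  rw [ae_iff]
  simp only [ne_eq, not_not]
  refine Measure.addHaar_submodule volume (LinearMap.ker (hypl z)) fun htop => hz ?_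
  have hzz : z ∈ LinearMap.ker (hypl z) := htop ▸ Submodule.mem_top
  exact dotProduct_self_eq_zero.1 hzz

lemma dense_setOf_forall_dotProduct_ne_zero (F : Finset (V n)) (hF : (0 : V n) ∉ F) :
    Dense {x : V n | ∀ z ∈ F, z ⬝ᵥ x ≠ 0} :=
  Measure.dense_of_ae (μ := volume) <| (eventually_all_finset F).2 fun _ hz =>
    ae_dotProduct_ne_zero (ne_of_mem_of_not_mem hz hF)

end Generic

section Sign

variable {p q : Bool} {a b : ℝ}

lemma mul_pos_iff_of_sign (ha : if p then 0 < a else a < 0) (hb : if q then 0 < b else b < 0) :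
    0 < a * b ↔ p = q := by
  cases p <;> cases q <;> simp only [if_true, if_false, Bool.false_eq_true] at ha hb <;>
    simp [mul_pos_iff, ha, hb, ha.asymm, hb.asymm]

lemma sign_of_mul_pos (ha : if p then 0 < a else a < 0) (h : 0 < a * b) :
    if p then 0 < b else b < 0 := by
  cases p <;> simp only [if_true, if_false, Bool.false_eq_true] at ha ⊢ <;> nlinarith

lemma sign_not_of_mul_neg (ha : if p then 0 < a else a < 0) (h : a * b < 0) :
    if !p then 0 < b else b < 0 := by
  cases p <;> simp only [Bool.not_true, Bool.not_false, if_true, if_false,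
    Bool.false_eq_true] at ha ⊢ <;> nlinarith

lemma ne_zero_of_sign (ha : if p then 0 < a else a < 0) : a ≠ 0 := by
  cases p <;> simp only [if_true, if_false, Bool.false_eq_true] at ha
  exacts [ha.ne, ha.ne']

end Sign

section Segment

variable {a b a' b' t : ℝ}

lemma mul_lineMap_pos_of_mul_pos (h : 0 < a * b) (ht₀ : 0 ≤ t) (ht₁ : t ≤ 1) :
    0 < a * lineMap a b t := by
  rw [lineMap_apply_ring]
  nlinarith [mul_nonneg ht₀ h.le, mul_nonneg (sub_nonneg.2 ht₁) (mul_self_nonneg a),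
    mul_self_pos.2 (left_ne_zero_of_mul (ne_of_gt h))]

lemma mul_lineMap_eq (h : a - b ≠ 0) :
    a * lineMap a b t = a * (a - b) * (a / (a - b) - t) := by
  rw [lineMap_apply_ring]
  field_simp
  ring

lemma mul_sub_pos_of_mul_neg (h : a * b < 0) : 0 < a * (a - b) := by
  nlinarith [mul_self_nonneg a]

lemma mul_lineMap_pos_iff (h : a * b < 0) : 0 < a * lineMap a b t ↔ t < a / (a - b) := by
  have hab := mul_sub_pos_of_mul_neg h
  rw [mul_lineMap_eq (right_ne_zero_of_mul hab.ne'), mul_pos_iff_of_pos_left hab, sub_pos]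

lemma mul_lineMap_neg_iff (h : a * b < 0) : a * lineMap a b t < 0 ↔ a / (a - b) < t := by
  have hab := mul_sub_pos_of_mul_neg h
  rw [mul_lineMap_eq (right_ne_zero_of_mul hab.ne'), ← neg_pos, ← mul_neg,
    mul_pos_iff_of_pos_left hab, neg_pos, sub_neg]

lemma div_sub_mem_Ioo_of_mul_neg (h : a * b < 0) : a / (a - b) ∈ Set.Ioo 0 1 := by
  constructor
  · have ha : 0 < a * lineMap a b (0 : ℝ) := by
      simpa using mul_self_pos.2 (left_ne_zero_of_mul h.ne)
    exact (mul_lineMap_pos_iff h).1 ha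
  · have hb : a * lineMap a b (1 : ℝ) < 0 := by simpa using h
    exact (mul_lineMap_neg_iff h).1 hb

lemma mul_eq_mul_of_div_sub_eq (h : a - b ≠ 0) (h' : a' - b' ≠ 0)
    (he : a / (a - b) = a' / (a' - b')) : a * b' = a' * b := by
  rw [div_eq_div_iff h h'] at he
  linarith

end Segment

section Chamber

variable {n : ℕ} {A : Finset (V n)} {c d c₀ : V n → Bool} {u v w x y p : V n}

lemma mem_sepSet : v ∈ SepSet A c d ↔ v ∈ A ∧ c v ≠ d v := Finset.mem_filter

lemma sepSet_self : SepSet A c c = ∅ := by simp [SepSet]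

lemma sepSet_not : SepSet A c (fun v => !c v) = A := by simp [SepSet]

lemma dotProduct_lineMap (t : ℝ) : v ⬝ᵥ lineMap x y t = lineMap (v ⬝ᵥ x) (v ⬝ᵥ y) t := by
  simp only [lineMap_apply_module, dotProduct_add, dotProduct_smul, smul_eq_mul]

lemma sameHyp_of_smul_eq {r s : ℝ} (hr : r ≠ 0) (hs : s ≠ 0) (h : r • u = s • w) :
    SameHyp u w := by
  intro z
  have hz : r * (u ⬝ᵥ z) = s * (w ⬝ᵥ z) := by
    simpa only [smul_dotProduct, smul_eq_mul] using congrArg (· ⬝ᵥ z) h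
  calc u ⬝ᵥ z = 0 ↔ r * (u ⬝ᵥ z) = 0 := by simp [hr]
    _ ↔ s * (w ⬝ᵥ z) = 0 := by rw [hz]
    _ ↔ w ⬝ᵥ z = 0 := by simp [hs]

lemma isOpen_setOf_realizes (A : Finset (V n)) (c : V n → Bool) :
    IsOpen {x | Realizes A c x} := by
  simp only [Realizes, Set.ofPred_forall]
  refine isOpen_biInter_finset fun v _ => ?_
  have hv : Continuous (v ⬝ᵥ · : V n → ℝ) := (hypl v).continuous_of_finiteDimensional
  cases c v
  · exact isOpen_lt hv continuous_const
  · exact isOpen_lt continuous_const hv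

lemma Realizes.dotProduct_ne_zero (hx : Realizes A c x) (hv : v ∈ A) : v ⬝ᵥ x ≠ 0 :=
  ne_zero_of_sign (hx v hv)

lemma Realizes.mul_dotProduct_pos_iff (hx : Realizes A c x) (hy : Realizes A d y) (hv : v ∈ A) :
    0 < (v ⬝ᵥ x) * (v ⬝ᵥ y) ↔ v ∉ SepSet A c d := by
  simp [mul_pos_iff_of_sign (hx v hv) (hy v hv), mem_sepSet, hv]

lemma Realizes.mul_dotProduct_neg_iff (hx : Realizes A c x) (hy : Realizes A d y) (hv : v ∈ A) :
    (v ⬝ᵥ x) * (v ⬝ᵥ y) < 0 ↔ v ∈ SepSet A c d := by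
  rw [← not_iff_not, ← hx.mul_dotProduct_pos_iff hy hv, not_lt,
    (mul_ne_zero (hx.dotProduct_ne_zero hv) (hy.dotProduct_ne_zero hv)).symm.le_iff_lt]

lemma Realizes.neg (hx : Realizes A c x) : Realizes A (fun v => !c v) (-x) := fun v hv => by
  refine sign_not_of_mul_neg (hx v hv) ?_
  rw [dotProduct_neg, mul_neg, neg_neg_iff_pos]
  exact mul_self_pos.2 (hx.dotProduct_ne_zero hv)

lemma IsChamber.neg (hc : IsChamber A c) : IsChamber A (fun v => !c v) :=
  let ⟨x, hx⟩ := hc; ⟨-x, hx.neg⟩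

lemma Realizes.update_not (hx : Realizes A c x) (hv : (v ⬝ᵥ x) * (v ⬝ᵥ p) < 0)
    (hw : ∀ w ∈ A, w ≠ v → 0 < (w ⬝ᵥ x) * (w ⬝ᵥ p)) :
    Realizes A (Function.update c v (!c v)) p := by
  intro w hwA
  by_cases hwv : w = v
  · subst hwv
    simpa using sign_not_of_mul_neg (hx w hwA) hv
  · simpa [Function.update_of_ne hwv] using sign_of_mul_pos (hx w hwA) (hw w hwA hwv)

end Chamber

section Adjacent

variable {n : ℕ} {A : Finset (V n)} {c d : V n → Bool} {y : V n}

-- The conclusion says that the segment from `x` to `y` crosses distinct hyperplanes of `A`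
-- at distinct times.
lemma IsChamber.exists_realizes_generic (hA : ∀ u ∈ A, ∀ w ∈ A, SameHyp u w → u = w)
    (hc : IsChamber A c) (hy : ∀ v ∈ A, v ⬝ᵥ y ≠ 0) :
    ∃ x, Realizes A c x ∧
      ∀ u ∈ A, ∀ w ∈ A, u ≠ w → (u ⬝ᵥ x) * (w ⬝ᵥ y) ≠ (w ⬝ᵥ x) * (u ⬝ᵥ y) := by
  set F := A.offDiag.image fun q : V n × V n => (q.2 ⬝ᵥ y) • q.1 - (q.1 ⬝ᵥ y) • q.2
  have hF : (0 : V n) ∉ F := by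
    simp only [F, Finset.mem_image, Finset.mem_offDiag]
    rintro ⟨⟨u, w⟩, ⟨hu, hw, huw⟩, h⟩
    exact huw (hA u hu w hw (sameHyp_of_smul_eq (hy w hw) (hy u hu) (sub_eq_zero.1 h)))
  obtain ⟨x, hx, hxF⟩ := (dense_setOf_forall_dotProduct_ne_zero F hF).inter_open_nonempty _
    (isOpen_setOf_realizes A c) hc
  refine ⟨x, hx, fun u hu w hw huw h => hxF _
    (Finset.mem_image_of_mem _ (Finset.mem_offDiag.2 ⟨hu, hw, huw⟩ : (u, w) ∈ A.offDiag)) ?_⟩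
  simp only [sub_dotProduct, smul_dotProduct, smul_eq_mul]
  linarith

lemma exists_update_isChamber_of_realizes {x : V n} (hx : Realizes A c x) (hy : Realizes A d y)
    (hgen : ∀ u ∈ A, ∀ w ∈ A, u ≠ w → (u ⬝ᵥ x) * (w ⬝ᵥ y) ≠ (w ⬝ᵥ x) * (u ⬝ᵥ y))
    (hS : (SepSet A c d).Nonempty) :
    ∃ v ∈ SepSet A c d, IsChamber A (Function.update c v (!c v)) := by
  set S := SepSet A c d
  set τ : V n → ℝ := fun v => (v ⬝ᵥ x) / (v ⬝ᵥ x - v ⬝ᵥ y)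
  have hSA : ∀ w ∈ S, w ∈ A := fun w hw => (mem_sepSet.1 hw).1
  have hneg : ∀ w ∈ S, (w ⬝ᵥ x) * (w ⬝ᵥ y) < 0 := fun w hw =>
    (hx.mul_dotProduct_neg_iff hy (hSA w hw)).2 hw
  obtain ⟨v, hvS, hvmin⟩ := S.exists_min_image τ hS
  have hv := hneg v hvS
  have hτv := div_sub_mem_Ioo_of_mul_neg hv
  have hτ : ∀ w ∈ S.erase v, τ v < τ w := by
    intro w hw
    obtain ⟨hwv, hwS⟩ := Finset.mem_erase.1 hw
    refine (hvmin w hwS).lt_of_ne fun he => hgen v (hSA v hvS) w (hSA w hwS) (Ne.symm hwv) ?_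
    have := mul_eq_mul_of_div_sub_eq (right_ne_zero_of_mul (mul_sub_pos_of_mul_neg hv).ne')
      (right_ne_zero_of_mul (mul_sub_pos_of_mul_neg (hneg w hwS)).ne') he
    linarith
  have hnear : ∀ᶠ t in 𝓝[>] τ v, t < 1 ∧ ∀ w ∈ S.erase v, t < τ w :=
    nhdsWithin_le_nhds <| (eventually_lt_nhds hτv.2).and <|
      (eventually_all_finset _).2 fun w hw => eventually_lt_nhds (hτ w hw)
  obtain ⟨t, ⟨ht₁, htS⟩, hvt⟩ := (hnear.and self_mem_nhdsWithin).exists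
  refine ⟨v, hvS, lineMap x y t, hx.update_not ?_ fun w hwA hwv => ?_⟩
  · rw [dotProduct_lineMap]
    exact (mul_lineMap_neg_iff hv).2 hvt
  · rw [dotProduct_lineMap]
    by_cases hwS : w ∈ S
    · exact (mul_lineMap_pos_iff (hneg w hwS)).2 (htS w (Finset.mem_erase.2 ⟨hwv, hwS⟩))
    · exact mul_lineMap_pos_of_mul_pos ((hx.mul_dotProduct_pos_iff hy hwA).2 hwS)
        (hτv.1.trans hvt).le ht₁.le

end Adjacent

section Interval

variable {n : ℕ} {A : Finset (V n)} {c c₀ d : V n → Bool} {v : V n}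

lemma sepSet_update_not (hv : v ∈ A) (hv₀ : c₀ v = c v) :
    SepSet A c₀ (Function.update c v (!c v)) = insert v (SepSet A c₀ c) := by
  ext w
  by_cases hwv : w = v
  · subst hwv
    simp [mem_sepSet, hv, hv₀]
  · simp [mem_sepSet, hwv]

lemma eq_of_mem_sepSet_of_sepSet_subset (h : SepSet A c₀ c ⊆ SepSet A c₀ d)
    (hv : v ∈ SepSet A c d) : c₀ v = c v := by
  obtain ⟨hvA, hcd⟩ := mem_sepSet.1 hv
  by_contra h₀
  have h₀d := (mem_sepSet.1 (h (mem_sepSet.2 ⟨hvA, h₀⟩))).2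
  revert hcd h₀ h₀d
  cases c₀ v <;> cases c v <;> cases d v <;> decide

lemma sepSet_nonempty_of_sepSet_ssubset (h : SepSet A c₀ c ⊂ SepSet A c₀ d) :
    (SepSet A c d).Nonempty := by
  obtain ⟨v, hvd, hvc⟩ := Finset.exists_of_ssubset h
  obtain ⟨hvA, h₀d⟩ := mem_sepSet.1 hvd
  have hv₀ : c₀ v = c v := by
    by_contra h'
    exact hvc (mem_sepSet.2 ⟨hvA, h'⟩)
  exact ⟨v, mem_sepSet.2 ⟨hvA, hv₀ ▸ h₀d⟩⟩

lemma IsChamber.exists_update_isChamber (hA : ∀ u ∈ A, ∀ w ∈ A, SameHyp u w → u = w)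
    (hc : IsChamber A c) (hd : IsChamber A d) (hS : (SepSet A c d).Nonempty) :
    ∃ v ∈ SepSet A c d, IsChamber A (Function.update c v (!c v)) := by
  obtain ⟨y, hy⟩ := hd
  obtain ⟨x, hx, hgen⟩ := hc.exists_realizes_generic hA fun v hv => hy.dotProduct_ne_zero hv
  exact exists_update_isChamber_of_realizes hx hy hgen hS

end Interval

theorem chamber_poset_graded_bounded {n : ℕ} (A : Finset (V n)) (hA : IsArrangement A)
    (c₀ : V n → Bool) (hc₀ : IsChamber A c₀) :
    (∀ c d, IsChamber A c → IsChamber A d → SepSet A c₀ c ⊂ SepSet A c₀ d →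
      ∃ e, IsChamber A e ∧ SepSet A c₀ c ⊆ SepSet A c₀ e ∧ SepSet A c₀ e ⊆ SepSet A c₀ d ∧
        (SepSet A c₀ e).card = (SepSet A c₀ c).card + 1) ∧
    SepSet A c₀ c₀ = ∅ ∧
    IsChamber A (fun v => !c₀ v) ∧ SepSet A c₀ (fun v => !c₀ v) = A := by
  refine ⟨fun c d hc hd hcd => ?_, sepSet_self, hc₀.neg, sepSet_not⟩
  obtain ⟨v, hv, he⟩ :=
    hc.exists_update_isChamber hA.2 hd (sepSet_nonempty_of_sepSet_ssubset hcd)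
  have hv₀ := eq_of_mem_sepSet_of_sepSet_subset hcd.subset hv
  obtain ⟨hvA, hvcd⟩ := mem_sepSet.1 hv
  have hvc : v ∉ SepSet A c₀ c := fun h => (mem_sepSet.1 h).2 hv₀
  refine ⟨_, he, ?_, ?_, ?_⟩ <;> rw [sepSet_update_not hvA hv₀]
  · exact Finset.subset_insert _ _
  · exact Finset.insert_subset (mem_sepSet.2 ⟨hvA, hv₀ ▸ hvcd⟩) hcd.subset
  · exact Finset.card_insert_of_notMem hvc
end

section
/- Let A be a real central hyperplane arrangement with chambers c₀ and c, and I ⊆ A. Then I is biclosed with respect to c₀ if and only if the symmetric difference I △ S(c₀,c) is biclosed with respect to c. In particular, the property of being biclosed is independent of the choice of fundamental chamber up to symmetric difference with a separation set. -/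
open Matrix
open scoped Classical

/-!
Localizing to `loc A u w` commutes with separation sets, and on any arrangement
`S(c₀, d) △ S(c₀, c) = S(c, d)` because the sign of `c₀` cancels in the exclusive or.
So a chamber `d` of the localization witnessing biclosedness of `I` at `c₀` also witnesses
biclosedness of `I △ S(c₀, c)` at `c`; the converse is the same statement with `c₀` and `c`
exchanged, since `△ S(c₀, c)` is an involution.
-/

namespace SepSet

variable {n : ℕ}

theorem comm (A : Finset (V n)) (c d : V n → Bool) : SepSet A c d = SepSet A d c :=
  Finset.filter_congr fun _ _ => ne_comm

theorem inter_of_subset {A B : Finset (V n)} (hBA : B ⊆ A) (c d : V n → Bool) :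
    SepSet A c d ∩ B = SepSet B c d := by
  ext v
  simp only [SepSet, Finset.mem_inter, Finset.mem_filter]
  exact ⟨fun ⟨⟨_, h⟩, hB⟩ => ⟨hB, h⟩, fun ⟨hB, h⟩ => ⟨⟨hBA hB, h⟩, hB⟩⟩

theorem symmDiff_eq (A : Finset (V n)) (c₀ c d : V n → Bool) :
    symmDiff (SepSet A c₀ d) (SepSet A c₀ c) = SepSet A c d := by
  ext v
  simp only [SepSet, Finset.mem_symmDiff, Finset.mem_filter]
  cases c₀ v <;> cases c v <;> cases d v <;> simp

end SepSet

theorem loc_subset {n : ℕ} (A : Finset (V n)) (u w : V n) : loc A u w ⊆ A :=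
  Finset.filter_subset _ _

theorem IsBiclosed.symmDiff_sepSet {n : ℕ} {A : Finset (V n)} {c₀ : V n → Bool}
    {I : Finset (V n)} (h : IsBiclosed A c₀ I) (c : V n → Bool) :
    IsBiclosed A c (symmDiff I (SepSet A c₀ c)) := by
  intro u w huw
  obtain ⟨d, hd, hId⟩ := h u w huw
  refine ⟨d, hd, ?_⟩
  calc symmDiff I (SepSet A c₀ c) ∩ loc A u w
      = symmDiff (I ∩ loc A u w) (SepSet A c₀ c ∩ loc A u w) := inf_symmDiff_distrib_right _ _ _
    _ = SepSet (loc A u w) c d := by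
      rw [hId, SepSet.inter_of_subset (loc_subset A u w), SepSet.symmDiff_eq]

theorem biclosed_change_of_base_general {n : ℕ} (A : Finset (V n))
    (c₀ c : V n → Bool)
    (I : Finset (V n)) :
    IsBiclosed A c₀ I ↔ IsBiclosed A c (symmDiff I (SepSet A c₀ c)) := by
  refine ⟨fun h => h.symmDiff_sepSet c, fun h => ?_⟩
  simpa only [SepSet.comm A c c₀, symmDiff_symmDiff_cancel_right] using h.symmDiff_sepSet c₀

theorem biclosed_change_of_base {n : ℕ} (A : Finset (V n)) (hA : IsArrangement A)
    (c₀ c : V n → Bool) (hc₀ : IsChamber A c₀) (hc : IsChamber A c)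
    (I : Finset (V n)) (hIA : I ⊆ A) :
    IsBiclosed A c₀ I ↔ IsBiclosed A c (symmDiff I (SepSet A c₀ c)) :=
  biclosed_change_of_base_general A c₀ c I
end

section
/- Let A be a real central hyperplane arrangement with fundamental chamber c₀ on the positive side of every hyperplane, viewed via its oriented matroid of circuits. A subset I ⊆ A is separable (equal to S(c₀,c) for some chamber c) if and only if there is no circuit v ∈ {0,+,−}^A with v⁻¹(+) ⊆ I and v⁻¹(−) ⊆ A − I. -/
open Matrix
open scoped Classical

/-!
With `c₀` all `+`, `I = S(c₀, c)` says that `c` is `-` on `I` and `+` on `A \ I`; so `I` is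
separable iff the opposite sign vector `τ` (`+` on `I`, `-` on `A \ I`) is feasible. The circuits
in the statement are exactly those conformal to `τ`. A conformal restriction of a feasible vector
is feasible, and an infeasible vector has an infeasible conformal restriction of minimal support,
which is a circuit.
-/

/-- The conformal order `v ≤ w` on sign vectors. -/
def Conforms {α : Type*} (v w : α → SignType) : Prop :=
  ∀ h, v h ≠ 0 → v h = w h

theorem Conforms.trans {α : Type*} {u v w : α → SignType} (huv : Conforms u v)
    (hvw : Conforms v w) : Conforms u w :=
  fun h hu => (huv h hu).trans (hvw h (huv h hu ▸ hu))

theorem Feasible.of_conforms {n : ℕ} {A : Finset (V n)} {v w : V n → SignType}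
    (hw : Feasible A w) (hvw : Conforms v w) : Feasible A v := by
  obtain ⟨x, hx⟩ := hw
  refine ⟨x, fun h hh => ⟨fun hv => (hx h hh).1 ?_, fun hv => (hx h hh).2 ?_⟩⟩
  · rw [← hvw h (by simp [hv]), hv]
  · rw [← hvw h (by simp [hv]), hv]

theorem feasible_of_forall_eq_zero {n : ℕ} (A : Finset (V n)) {w : V n → SignType}
    (hw : ∀ h, w h = 0) : Feasible A w :=
  ⟨0, fun h _ => by simp [hw h]⟩

noncomputable def supportIn {n : ℕ} (A : Finset (V n)) (w : V n → SignType) : Finset (V n) :=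
  A.filter (fun h => w h ≠ 0)

theorem card_supportIn_lt {n : ℕ} {A : Finset (V n)} {v w : V n → SignType}
    (hw : ∀ h, w h ≠ 0 → h ∈ A) (hvw : {h | v h ≠ 0} ⊂ {h | w h ≠ 0}) :
    (supportIn A v).card < (supportIn A w).card := by
  have hsub : supportIn A v ⊆ supportIn A w := fun h hh => by
    simp only [supportIn, Finset.mem_filter] at hh ⊢
    exact ⟨hh.1, hvw.subset hh.2⟩
  obtain ⟨h, hwh, hvh⟩ := Set.exists_of_ssubset hvw
  apply Finset.card_lt_card
  exact (Finset.ssubset_iff_of_subset hsub).mpr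
    ⟨h, by simp_all [supportIn], by simp_all [supportIn]⟩

theorem exists_isCircuit_conforms_of_not_feasible {n : ℕ} {A : Finset (V n)}
    {w : V n → SignType} (hwA : ∀ h, w h ≠ 0 → h ∈ A) (hw : ¬ Feasible A w) :
    ∃ v, IsCircuit A v ∧ Conforms v w := by
  obtain ⟨v, ⟨hvw, hv⟩, hmin⟩ := (measure (fun u => (supportIn A u).card)).wf.has_min
    {u | Conforms u w ∧ ¬ Feasible A u} ⟨w, fun _ _ => rfl, hw⟩
  have hvA : ∀ h, v h ≠ 0 → h ∈ A := fun h hh => hwA h (hvw h hh ▸ hh)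
  refine ⟨v, ⟨hvA, ?_, hv, fun u huv hsub => ?_⟩, hvw⟩
  · by_contra! hzero
    exact hv (feasible_of_forall_eq_zero A hzero)
  · by_contra hu
    exact hmin u ⟨Conforms.trans huv hvw, hu⟩ (card_supportIn_lt hvA hsub)

theorem feasible_iff_not_exists_isCircuit_conforms {n : ℕ} {A : Finset (V n)}
    {w : V n → SignType} (hwA : ∀ h, w h ≠ 0 → h ∈ A) :
    Feasible A w ↔ ¬ ∃ v, IsCircuit A v ∧ Conforms v w := by
  refine ⟨fun hw ⟨v, hv, hvw⟩ => hv.2.2.1 (hw.of_conforms hvw), fun h => ?_⟩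
  by_contra hw
  exact h (exists_isCircuit_conforms_of_not_feasible hwA hw)

noncomputable def oppositeSign {n : ℕ} (A I : Finset (V n)) : V n → SignType :=
  fun h => if h ∈ I then 1 else if h ∈ A then -1 else 0

theorem oppositeSign_eq_one_iff {n : ℕ} {A I : Finset (V n)} {h : V n} :
    oppositeSign A I h = 1 ↔ h ∈ I := by
  unfold oppositeSign
  split_ifs <;> simp_all

theorem oppositeSign_eq_neg_one_iff {n : ℕ} {A I : Finset (V n)} {h : V n} :
    oppositeSign A I h = -1 ↔ h ∈ A \ I := by
  unfold oppositeSign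
  split_ifs <;> simp_all

theorem oppositeSign_ne_zero {n : ℕ} {A I : Finset (V n)} (hIA : I ⊆ A) {h : V n}
    (hh : oppositeSign A I h ≠ 0) : h ∈ A := by
  rcases SignType.trichotomy (oppositeSign A I h) with h1 | h1 | h1
  · exact (Finset.mem_sdiff.mp (oppositeSign_eq_neg_one_iff.mp h1)).1
  · exact absurd h1 hh
  · exact hIA (oppositeSign_eq_one_iff.mp h1)

theorem conforms_oppositeSign_iff {n : ℕ} {A I : Finset (V n)} {v : V n → SignType} :
    Conforms v (oppositeSign A I) ↔
      {h | v h = 1} ⊆ (I : Set (V n)) ∧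
        {h | v h = -1} ⊆ ((A \ I : Finset (V n)) : Set (V n)) := by
  constructor
  · intro hv
    refine ⟨fun h h1 => ?_, fun h h1 => ?_⟩
    · exact oppositeSign_eq_one_iff.mp ((hv h (by simp_all)).symm.trans h1)
    · exact oppositeSign_eq_neg_one_iff.mp ((hv h (by simp_all)).symm.trans h1)
  · rintro ⟨hpos, hneg⟩ h hh
    rcases SignType.trichotomy (v h) with h1 | h1 | h1
    · rw [h1, oppositeSign_eq_neg_one_iff.mpr (hneg h1)]
    · exact absurd h1 hh
    · rw [h1, oppositeSign_eq_one_iff.mpr (hpos h1)]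

theorem exists_sepSet_eq_iff_feasible {n : ℕ} {A I : Finset (V n)} (hIA : I ⊆ A) :
    (∃ c, IsChamber A c ∧ I = SepSet A (fun _ => true) c) ↔
      Feasible A (oppositeSign A I) := by
  constructor
  · rintro ⟨c, ⟨x, hx⟩, rfl⟩
    refine ⟨-x, fun h hh => ⟨fun h1 => ?_, fun h1 => ?_⟩⟩
    · have hc : c h = false := by simpa [SepSet, hh] using oppositeSign_eq_one_iff.mp h1
      simpa [hc, dotProduct_neg] using hx h hh
    · have hc : c h = true := by simpa [SepSet, hh] using oppositeSign_eq_neg_one_iff.mp h1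
      simpa [hc, dotProduct_neg] using hx h hh
  · rintro ⟨x, hx⟩
    refine ⟨fun h => decide (h ∉ I), ⟨-x, fun h hh => ?_⟩, ?_⟩
    · by_cases hI : h ∈ I
      · simpa [hI, dotProduct_neg] using (hx h hh).1 (oppositeSign_eq_one_iff.mpr hI)
      · simpa [hI, dotProduct_neg] using
          (hx h hh).2 (oppositeSign_eq_neg_one_iff.mpr (Finset.mem_sdiff.mpr ⟨hh, hI⟩))
    · ext h
      simp only [SepSet, Finset.mem_filter]
      by_cases hI : h ∈ I
      · simp [hI, hIA hI]
      · simp [hI]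

theorem separable_iff_no_circuit_general {n : ℕ} (A : Finset (V n))
    (I : Finset (V n)) (hIA : I ⊆ A) :
    (∃ c, IsChamber A c ∧ I = SepSet A (fun _ => true) c) ↔
      ¬ ∃ v : V n → SignType, IsCircuit A v ∧
        {h | v h = 1} ⊆ (I : Set (V n)) ∧
        {h | v h = -1} ⊆ ((A \ I : Finset (V n)) : Set (V n)) := by
  rw [exists_sepSet_eq_iff_feasible hIA,
    feasible_iff_not_exists_isCircuit_conforms fun _ => oppositeSign_ne_zero hIA]
  simp only [conforms_oppositeSign_iff]

theorem separable_iff_no_circuit {n : ℕ} (A : Finset (V n)) (hA : IsArrangement A)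
    (hc₀ : IsChamber A (fun _ => true)) (I : Finset (V n)) (hIA : I ⊆ A) :
    (∃ c, IsChamber A c ∧ I = SepSet A (fun _ => true) c) ↔
      ¬ ∃ v : V n → SignType, IsCircuit A v ∧
        {h | v h = 1} ⊆ (I : Set (V n)) ∧
        {h | v h = -1} ⊆ ((A \ I : Finset (V n)) : Set (V n)) :=
  separable_iff_no_circuit_general A I hIA
end

section
/- Let A be a real central hyperplane arrangement with fundamental chamber c₀ (on the positive side of all hyperplanes). A subset I ⊆ A is 2-closed if and only if there is no circuit v of A with |v⁻¹(+)| = 2, |v⁻¹(−)| = 1, v⁻¹(+) ⊆ I, and v⁻¹(−) ⊆ A − I. -/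
open Matrix
open scoped Classical

/-! Fix `x₀` in the fundamental chamber. A circuit `(+p, +q, -H)` means that no point is positive
on `p, q` and negative on `H`; perturbing `x₀` along `ker p ∩ ker q` shows that the hyperplane of `H`
contains `ker p ∩ ker q`, and convexity in that rank-2 localization yields a chamber in which `p, q > 0 > H`.

Conversely, let `H ∉ I` lie in the localization at `X = ker u ∩ ker w` and pick `p ∈ ker H \ X`.
Pushing `p` or `-p` slightly towards `-x₀` gives the two chambers adjacent to `H` on its negative
side. If `I` is positive on neither, some `p₁, p₂ ∈ I` take opposite signs at `p`. All forms of the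
localization lie in the plane spanned by `u, w`, where those vanishing at `p` form a line; hence
`(p₂ ⬝ᵥ p) • p₁ - (p₁ ⬝ᵥ p) • p₂` is a positive multiple of `H`, and `(+p₁, +p₂, -H)` is a
circuit. -/

open Filter Topology

variable {n : ℕ}

lemma mem_span_range_of_ker {ι : Type*} [Finite ι] {L : ι → V n} {h : V n}
    (hk : ∀ x, (∀ i, L i ⬝ᵥ x = 0) → h ⬝ᵥ x = 0) : h ∈ Submodule.span ℝ (Set.range L) := by
  let e := dotProductEquiv ℝ (Fin n)
  have he : e h ∈ Submodule.span ℝ (Set.range (e ∘ L)) :=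
    mem_span_of_iInf_ker_le_ker fun x hx => hk x (by simpa [e] using hx)
  rwa [Set.range_comp, ← LinearEquiv.coe_coe,
    Submodule.apply_mem_span_image_iff_mem_span e.injective] at he

lemma exists_smul_eq_of_ker {q h : V n} (hk : ∀ x, q ⬝ᵥ x = 0 → h ⬝ᵥ x = 0) :
    ∃ c : ℝ, c • q = h := by
  have := mem_span_range_of_ker (L := fun _ : Unit => q) fun x hx => hk x (hx ())
  rwa [Set.range_const, Submodule.mem_span_singleton] at this

lemma mem_span_pair_of_mem_loc {A : Finset (V n)} {u w g : V n} (hg : g ∈ loc A u w) :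
    g ∈ Submodule.span ℝ {u, w} := by
  have := mem_span_range_of_ker (L := ![u, w]) fun x hx =>
    (Finset.mem_filter.1 hg).2 x (hx 0) (hx 1)
  rwa [Matrix.range_cons, Matrix.range_cons, Matrix.range_empty, Set.union_empty,
    Set.singleton_union] at this

lemma exists_dot_eq_zero_of_linearIndependent {u w : V n} (huw : LinearIndependent ℝ ![u, w])
    (H : V n) : ∃ p, H ⬝ᵥ p = 0 ∧ ¬(u ⬝ᵥ p = 0 ∧ w ⬝ᵥ p = 0) := by
  by_contra! h
  obtain ⟨a, rfl⟩ := exists_smul_eq_of_ker fun x hx => (h x hx).1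
  obtain ⟨b, rfl⟩ := exists_smul_eq_of_ker fun x hx => (h x hx).2
  have hab := LinearIndependent.pair_iff.1 huw b (-a) (by
    rw [smul_smul, smul_smul, mul_comm, neg_mul, neg_smul, add_neg_cancel])
  exact huw.ne_zero 0 (by simp [neg_eq_zero.1 hab.2])

lemma exists_smul_eq_of_dot_eq_zero {u w p g H : V n} (hp : ¬(u ⬝ᵥ p = 0 ∧ w ⬝ᵥ p = 0))
    (hH0 : H ≠ 0) (hg : g ∈ Submodule.span ℝ {u, w}) (hH : H ∈ Submodule.span ℝ {u, w})
    (hgp : g ⬝ᵥ p = 0) (hHp : H ⬝ᵥ p = 0) : ∃ k : ℝ, k • H = g := by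
  obtain ⟨a, b, rfl⟩ := Submodule.mem_span_pair.1 hg
  obtain ⟨c, d, rfl⟩ := Submodule.mem_span_pair.1 hH
  simp only [add_dotProduct, smul_dotProduct, smul_eq_mul] at hgp hHp
  have hdet : a * d = b * c := by
    by_contra hne
    have hne' : a * d - b * c ≠ 0 := sub_ne_zero.2 hne
    refine hp ⟨?_, ?_⟩
    · exact (mul_eq_zero.1 (by linear_combination d * hgp - b * hHp :
        (a * d - b * c) * u ⬝ᵥ p = 0)).resolve_left hne'
    · exact (mul_eq_zero.1 (by linear_combination a * hHp - c * hgp :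
        (a * d - b * c) * w ⬝ᵥ p = 0)).resolve_left hne'
  rcases eq_or_ne c 0 with rfl | hc
  · have hd : d ≠ 0 := by rintro rfl; simp at hH0
    obtain rfl : a = 0 := by simpa [hd] using hdet
    exact ⟨b / d, by simp [smul_smul, div_mul_cancel₀ _ hd]⟩
  · refine ⟨a / c, ?_⟩
    rw [smul_add, smul_smul, smul_smul, div_mul_cancel₀ _ hc, div_mul_eq_mul_div, hdet,
      mul_div_cancel_right₀ _ hc]

lemma exists_pos_smul_add_smul_eq {u w p H p₁ p₂ x₀ : V n}
    (hp : ¬(u ⬝ᵥ p = 0 ∧ w ⬝ᵥ p = 0)) (hH : H ∈ Submodule.span ℝ {u, w})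
    (h₁ : p₁ ∈ Submodule.span ℝ {u, w}) (h₂ : p₂ ∈ Submodule.span ℝ {u, w})
    (hHp : H ⬝ᵥ p = 0) (hp₁ : p₁ ⬝ᵥ p < 0) (hp₂ : 0 < p₂ ⬝ᵥ p)
    (hHx : 0 < H ⬝ᵥ x₀) (hx₁ : 0 < p₁ ⬝ᵥ x₀) (hx₂ : 0 < p₂ ⬝ᵥ x₀) :
    ∃ α β : ℝ, 0 < α ∧ 0 < β ∧ α • p₁ + β • p₂ = H := by
  have hH0 : H ≠ 0 := by rintro rfl; simp at hHx
  obtain ⟨k, hk⟩ := exists_smul_eq_of_dot_eq_zero (g := (p₂ ⬝ᵥ p) • p₁ - (p₁ ⬝ᵥ p) • p₂) hp hH0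
    (Submodule.sub_mem _ (Submodule.smul_mem _ _ h₁) (Submodule.smul_mem _ _ h₂)) hH
    (by simp only [sub_dotProduct, smul_dotProduct, smul_eq_mul]; ring) hHp
  have hk0 : 0 < k := by
    have hkx := congrArg (· ⬝ᵥ x₀) hk
    simp only [smul_dotProduct, sub_dotProduct, smul_eq_mul] at hkx
    have : 0 < k * H ⬝ᵥ x₀ := by rw [hkx]; nlinarith
    exact pos_of_mul_pos_left this hHx.le
  refine ⟨k⁻¹ * p₂ ⬝ᵥ p, k⁻¹ * -(p₁ ⬝ᵥ p), by positivity, mul_pos (inv_pos.2 hk0) (by linarith), ?_⟩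
  rw [mul_smul, mul_smul, ← smul_add, neg_smul, ← sub_eq_add_neg, ← hk, inv_smul_smul₀ hk0.ne']

lemma exists_dot_add_smul_neg (x₀ : V n) {y H : V n} (hy : H ⬝ᵥ y ≠ 0) :
    ∃ t : ℝ, H ⬝ᵥ (x₀ + t • y) < 0 :=
  ⟨(-1 - H ⬝ᵥ x₀) / H ⬝ᵥ y, by
    rw [dotProduct_add, dotProduct_smul, smul_eq_mul, div_mul_cancel₀ _ hy]; linarith⟩

/-- The witness is `σ - δ • x₀` for small `δ > 0`. -/
lemma exists_dot_pos_of_pos_of_nonpos {L : Finset (V n)} {x₀ : V n}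
    (hx₀ : ∀ g ∈ L, 0 < g ⬝ᵥ x₀) (σ : V n) :
    ∃ z, ∀ g ∈ L, (0 < g ⬝ᵥ σ → 0 < g ⬝ᵥ z) ∧ (g ⬝ᵥ σ ≤ 0 → g ⬝ᵥ z < 0) := by
  have hev : ∀ᶠ δ in 𝓝[>] (0 : ℝ), ∀ g ∈ L,
      (0 < g ⬝ᵥ σ → 0 < g ⬝ᵥ σ - δ * g ⬝ᵥ x₀) ∧ (g ⬝ᵥ σ ≤ 0 → g ⬝ᵥ σ - δ * g ⬝ᵥ x₀ < 0) := by
    refine (Finset.eventually_all L).2 fun g hg => ?_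
    by_cases hσ : 0 < g ⬝ᵥ σ
    · have hlim : Tendsto (fun δ : ℝ => g ⬝ᵥ σ - δ * g ⬝ᵥ x₀) (𝓝[>] 0) (𝓝 (g ⬝ᵥ σ)) :=
        ((Continuous.tendsto' (by fun_prop) 0 _ (by simp))).mono_left nhdsWithin_le_nhds
      filter_upwards [hlim.eventually (lt_mem_nhds hσ)] with δ hδ
      exact ⟨fun _ => hδ, fun h => absurd h (not_le.2 hσ)⟩
    · filter_upwards [self_mem_nhdsWithin] with δ (hδ : 0 < δ)
      exact ⟨fun h => absurd h hσ, fun _ => by nlinarith [mul_pos hδ (hx₀ g hg)]⟩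
  obtain ⟨δ, hδ⟩ := hev.exists
  exact ⟨σ - δ • x₀, fun g hg => by simpa [dotProduct_sub, dotProduct_smul] using hδ g hg⟩

lemma exists_chamber_sepSet_of_dot_eq_zero {L J : Finset (V n)} {x₀ : V n}
    (hx₀ : ∀ g ∈ L, 0 < g ⬝ᵥ x₀) {H σ : V n} (hH : H ∈ L) (hHσ : H ⬝ᵥ σ = 0)
    (hJ : ∀ g ∈ J, 0 < g ⬝ᵥ σ) :
    ∃ e, IsChamber L e ∧ H ∈ SepSet L (fun _ => true) e ∧ SepSet L (fun _ => true) e ⊆ L \ J := by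
  obtain ⟨z, hz⟩ := exists_dot_pos_of_pos_of_nonpos hx₀ σ
  refine ⟨fun g => decide (0 < g ⬝ᵥ z), ⟨z, fun g hg => ?_⟩, ?_, fun g hg => ?_⟩
  · rcases lt_or_ge 0 (g ⬝ᵥ σ) with h | h
    · simp [(hz g hg).1 h]
    · have := (hz g hg).2 h
      simp [this, not_lt_of_gt this]
  · simp [SepSet, hH, ((hz H hH).2 hHσ.le).le]
  · rw [SepSet, Finset.mem_filter] at hg
    exact Finset.mem_sdiff.2 ⟨hg.1, fun hgJ => hg.2 (by simpa using (hz g hg.1).1 (hJ g hgJ))⟩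

namespace IsArrangement

variable {A : Finset (V n)}

lemma eq_of_eq_smul (hA : IsArrangement A) {a b : V n} (ha : a ∈ A) (hb : b ∈ A) {c : ℝ}
    (h : b = c • a) : b = a := by
  have hc : c ≠ 0 := by rintro rfl; exact hA.1 b hb (by simpa using h)
  refine (hA.2 a ha b hb fun x => ?_).symm
  simp [h, smul_dotProduct, hc]

lemma linearIndependent_pair (hA : IsArrangement A) {a b : V n} (ha : a ∈ A) (hb : b ∈ A)
    (hab : a ≠ b) : LinearIndependent ℝ ![a, b] := by
  refine LinearIndependent.pair_iff.2 fun s t hst => ?_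
  rcases eq_or_ne t 0 with rfl | ht
  · simpa [hA.1 a ha] using hst
  · refine absurd (hA.eq_of_eq_smul ha hb (c := -s / t) ?_).symm hab
    apply smul_right_injective _ ht
    simp only [smul_smul, mul_div_cancel₀ _ ht]
    linear_combination (norm := module) hst

lemma smul_add_smul_ne_left (hA : IsArrangement A) {p q : V n} (hp : p ∈ A) (hq : q ∈ A)
    (hpq : p ≠ q) {α β : ℝ} (hβ : β ≠ 0) : α • p + β • q ≠ p := by
  intro h
  refine hpq (hA.eq_of_eq_smul hp hq (c := β⁻¹ * (1 - α)) ?_).symm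
  rw [mul_smul, eq_inv_smul_iff₀ hβ, sub_smul, one_smul, eq_sub_iff_add_eq, add_comm, h]

lemma exists_dot_pos_dot_neg (hA : IsArrangement A) {x₀ : V n} (hx₀ : ∀ h ∈ A, 0 < h ⬝ᵥ x₀)
    {q H : V n} (hq : q ∈ A) (hH : H ∈ A) (hqH : q ≠ H) : ∃ x, 0 < q ⬝ᵥ x ∧ H ⬝ᵥ x < 0 := by
  obtain ⟨y, hqy, hHy⟩ : ∃ y, q ⬝ᵥ y = 0 ∧ H ⬝ᵥ y ≠ 0 := by
    by_contra! h
    obtain ⟨c, hc⟩ := exists_smul_eq_of_ker h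
    exact hqH (hA.eq_of_eq_smul hq hH hc.symm).symm
  obtain ⟨t, ht⟩ := exists_dot_add_smul_neg x₀ hHy
  exact ⟨x₀ + t • y, by simpa [dotProduct_add, dotProduct_smul, hqy] using hx₀ q hq, ht⟩

end IsArrangement

lemma isConvex_loc_of_forall_smul_add_smul_ne {A : Finset (V n)} (hA : IsArrangement A) {x₀ : V n}
    (hx₀ : ∀ h ∈ A, 0 < h ⬝ᵥ x₀) {u w : V n} (huw : LinearIndependent ℝ ![u, w])
    {J : Finset (V n)} (hJ : J ⊆ loc A u w)
    (hcomb : ∀ H ∈ loc A u w \ J, ∀ p ∈ J, ∀ q ∈ J, p ≠ q →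
      ∀ α β : ℝ, 0 < α → 0 < β → α • p + β • q ≠ H) :
    IsConvex (loc A u w) (fun _ => true) J := by
  intro H hH
  obtain ⟨hHL, hHJ⟩ := Finset.mem_sdiff.1 hH
  have hLA : loc A u w ⊆ A := Finset.filter_subset _ _
  have hxL : ∀ g ∈ loc A u w, 0 < g ⬝ᵥ x₀ := fun g hg => hx₀ g (hLA hg)
  obtain ⟨p, hHp, hp⟩ := exists_dot_eq_zero_of_linearIndependent huw H
  have hJp : ∀ g ∈ J, g ⬝ᵥ p ≠ 0 := by
    intro g hgJ hgp
    obtain ⟨k, hk⟩ := exists_smul_eq_of_dot_eq_zero hp (hA.1 H (hLA hHL))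
      (mem_span_pair_of_mem_loc (hJ hgJ)) (mem_span_pair_of_mem_loc hHL) hgp hHp
    exact hHJ (hA.eq_of_eq_smul (hLA hHL) (hLA (hJ hgJ)) hk.symm ▸ hgJ)
  by_cases hpos : ∀ g ∈ J, 0 < g ⬝ᵥ p
  · exact exists_chamber_sepSet_of_dot_eq_zero hxL hHL hHp hpos
  by_cases hneg : ∀ g ∈ J, 0 < g ⬝ᵥ -p
  · exact exists_chamber_sepSet_of_dot_eq_zero hxL hHL (by simp [hHp]) hneg
  push Not at hpos hneg
  obtain ⟨p₁, hp₁J, hp₁⟩ := hpos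
  obtain ⟨p₂, hp₂J, hp₂⟩ := hneg
  replace hp₁ : p₁ ⬝ᵥ p < 0 := hp₁.lt_of_ne (hJp p₁ hp₁J)
  replace hp₂ : 0 < p₂ ⬝ᵥ p := by
    rw [dotProduct_neg, neg_nonpos] at hp₂
    exact hp₂.lt_of_ne' (hJp p₂ hp₂J)
  obtain ⟨α, β, hα, hβ, hαβ⟩ := exists_pos_smul_add_smul_eq hp (mem_span_pair_of_mem_loc hHL)
    (mem_span_pair_of_mem_loc (hJ hp₁J)) (mem_span_pair_of_mem_loc (hJ hp₂J)) hHp hp₁ hp₂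
    (hxL H hHL) (hxL p₁ (hJ hp₁J)) (hxL p₂ (hJ hp₂J))
  exact absurd hαβ (hcomb H hH p₁ hp₁J p₂ hp₂J (by rintro rfl; linarith) α β hα hβ)

lemma mem_loc_of_not_exists_dot {A : Finset (V n)} {p q H x₀ : V n} (hH : H ∈ A)
    (hp : 0 < p ⬝ᵥ x₀) (hq : 0 < q ⬝ᵥ x₀)
    (hno : ¬∃ x, 0 < p ⬝ᵥ x ∧ 0 < q ⬝ᵥ x ∧ H ⬝ᵥ x < 0) : H ∈ loc A p q := by
  refine Finset.mem_filter.2 ⟨hH, fun y hpy hqy => ?_⟩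
  by_contra hHy
  obtain ⟨t, ht⟩ := exists_dot_add_smul_neg x₀ hHy
  exact hno ⟨x₀ + t • y, by simpa [dotProduct_add, dotProduct_smul, hpy] using hp,
    by simpa [dotProduct_add, dotProduct_smul, hqy] using hq, ht⟩

lemma Is2Closed.exists_dot_pos_pos_neg {A I : Finset (V n)} (h2 : Is2Closed A (fun _ => true) I)
    (hA : IsArrangement A) (hIA : I ⊆ A) {x₀ : V n} (hx₀ : ∀ h ∈ A, 0 < h ⬝ᵥ x₀)
    {p q H : V n} (hp : p ∈ I) (hq : q ∈ I) (hpq : p ≠ q) (hH : H ∈ A \ I) :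
    ∃ x, 0 < p ⬝ᵥ x ∧ 0 < q ⬝ᵥ x ∧ H ⬝ᵥ x < 0 := by
  by_contra hno
  obtain ⟨hHA, hHI⟩ := Finset.mem_sdiff.1 hH
  have hHL := mem_loc_of_not_exists_dot hHA (hx₀ p (hIA hp)) (hx₀ q (hIA hq)) hno
  obtain ⟨e, ⟨x, hx⟩, hHe, hsub⟩ :=
    h2 p q ⟨hIA hp, hIA hq, hA.linearIndependent_pair (hIA hp) (hIA hq) hpq⟩ H
      (Finset.mem_sdiff.2 ⟨hHL, fun h => hHI (Finset.mem_inter.1 h).1⟩)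
  have hpos : ∀ g ∈ I, g ∈ loc A p q → 0 < g ⬝ᵥ x := by
    intro g hgI hgL
    have he : e g = true := by
      by_contra he
      exact (Finset.mem_sdiff.1 (hsub (Finset.mem_filter.2 ⟨hgL, by simpa using he⟩))).2
        (Finset.mem_inter.2 ⟨hgI, hgL⟩)
    simpa [he] using hx g hgL
  have he : e H = false := by simpa [SepSet] using (Finset.mem_filter.1 hHe).2
  exact hno ⟨x, hpos p hp (Finset.mem_filter.2 ⟨hIA hp, fun _ h _ => h⟩),
    hpos q hq (Finset.mem_filter.2 ⟨hIA hq, fun _ _ h => h⟩), by simpa [he] using hx H hHL⟩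

lemma feasible_of_dot_pos_pos_neg {A : Finset (V n)} {v : V n → SignType} {p q H x : V n}
    (hP : {h | v h = 1} = {p, q}) (hN : {h | v h = -1} = {H})
    (hp : 0 < p ⬝ᵥ x) (hq : 0 < q ⬝ᵥ x) (hH : H ⬝ᵥ x < 0) : Feasible A v := by
  refine ⟨x, fun h _ => ⟨fun h1 => ?_, fun h1 => ?_⟩⟩
  · have hpq : h ∈ ({p, q} : Set (V n)) := hP ▸ h1
    obtain rfl | rfl := hpq
    exacts [hp, hq]
  · have hH' : h ∈ ({H} : Set (V n)) := hN ▸ h1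
    rw [hH']
    exact hH

lemma isCircuit_of_forall_feasible_erase {A : Finset (V n)} {v : V n → SignType}
    (hvA : ∀ h, v h ≠ 0 → h ∈ A) (hv : ∃ h, v h ≠ 0) (hinf : ¬Feasible A v)
    (herase : ∀ h, v h ≠ 0 → ∃ x, ∀ g ≠ h, (v g = 1 → 0 < g ⬝ᵥ x) ∧ (v g = -1 → g ⬝ᵥ x < 0)) :
    IsCircuit A v := by
  refine ⟨hvA, hv, hinf, fun w hwv hsub => ?_⟩
  obtain ⟨h, hvh, hwh⟩ : ∃ h, v h ≠ 0 ∧ w h = 0 := by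
    by_contra! hc
    exact hsub.2 fun h => hc h
  obtain ⟨x, hx⟩ := herase h hvh
  refine ⟨x, fun g _ => ?_⟩
  rcases eq_or_ne g h with rfl | hgh
  · simp [hwh]
  · constructor <;> intro hg
    · exact (hx g hgh).1 ((hwv g (by simp [hg])).symm.trans hg)
    · exact (hx g hgh).2 ((hwv g (by simp [hg])).symm.trans hg)

noncomputable def twoPosOneNeg (p q H : V n) : V n → SignType :=
  fun h => if h = H then -1 else if h = p ∨ h = q then 1 else 0

lemma twoPosOneNeg_eq_one_iff {p q H h : V n} (hpH : p ≠ H) (hqH : q ≠ H) :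
    twoPosOneNeg p q H h = 1 ↔ h = p ∨ h = q := by
  unfold twoPosOneNeg; split_ifs <;> simp_all [eq_comm (a := H)]

lemma twoPosOneNeg_eq_neg_one_iff {p q H h : V n} : twoPosOneNeg p q H h = -1 ↔ h = H := by
  unfold twoPosOneNeg; split_ifs <;> simp_all

lemma twoPosOneNeg_ne_zero_iff {p q H h : V n} :
    twoPosOneNeg p q H h ≠ 0 ↔ h = p ∨ h = q ∨ h = H := by
  unfold twoPosOneNeg; split_ifs <;> simp_all

lemma isCircuit_twoPosOneNeg {A : Finset (V n)} (hA : IsArrangement A) {x₀ : V n}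
    (hx₀ : ∀ h ∈ A, 0 < h ⬝ᵥ x₀) {p q H : V n} (hp : p ∈ A) (hq : q ∈ A) (hH : H ∈ A)
    (hpq : p ≠ q) {α β : ℝ} (hα : 0 < α) (hβ : 0 < β) (hHpq : α • p + β • q = H) :
    IsCircuit A (twoPosOneNeg p q H) := by
  have hpH : p ≠ H := hHpq ▸ (hA.smul_add_smul_ne_left hp hq hpq hβ.ne').symm
  have hqH : q ≠ H :=
    hHpq ▸ add_comm (β • q) (α • p) ▸ (hA.smul_add_smul_ne_left hq hp hpq.symm hα.ne').symm
  have hone {h} := twoPosOneNeg_eq_one_iff (h := h) hpH hqH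
  refine isCircuit_of_forall_feasible_erase (fun h hh => ?_) ⟨p, by simp [twoPosOneNeg_ne_zero_iff]⟩
    ?_ (fun h hh => ?_)
  · rcases twoPosOneNeg_ne_zero_iff.1 hh with rfl | rfl | rfl <;> assumption
  · rintro ⟨x, hx⟩
    have hpx := (hx p hp).1 (hone.2 (Or.inl rfl))
    have hqx := (hx q hq).1 (hone.2 (Or.inr rfl))
    have hHx := (hx H hH).2 (twoPosOneNeg_eq_neg_one_iff.2 rfl)
    rw [← hHpq, add_dotProduct, smul_dotProduct, smul_dotProduct, smul_eq_mul, smul_eq_mul] at hHx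
    nlinarith [mul_pos hα hpx, mul_pos hβ hqx]
  · rcases twoPosOneNeg_ne_zero_iff.1 hh with rfl | rfl | rfl
    · obtain ⟨x, hqx, hHx⟩ := hA.exists_dot_pos_dot_neg hx₀ hq hH hqH
      refine ⟨x, fun g hg => ⟨fun h1 => ?_, fun h1 => ?_⟩⟩
      · rwa [(hone.1 h1).resolve_left hg]
      · rwa [twoPosOneNeg_eq_neg_one_iff.1 h1]
    · obtain ⟨x, hpx, hHx⟩ := hA.exists_dot_pos_dot_neg hx₀ hp hH hpH
      refine ⟨x, fun g hg => ⟨fun h1 => ?_, fun h1 => ?_⟩⟩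
      · rwa [(hone.1 h1).resolve_right hg]
      · rwa [twoPosOneNeg_eq_neg_one_iff.1 h1]
    · refine ⟨x₀, fun g hg => ⟨fun h1 => hx₀ g ?_, fun h1 => ?_⟩⟩
      · rcases hone.1 h1 with rfl | rfl <;> assumption
      · exact absurd (twoPosOneNeg_eq_neg_one_iff.1 h1) hg

lemma exists_circuit_of_smul_add_smul_eq {A I : Finset (V n)} (hA : IsArrangement A)
    (hIA : I ⊆ A) {x₀ : V n} (hx₀ : ∀ h ∈ A, 0 < h ⬝ᵥ x₀) {p q H : V n} (hp : p ∈ I)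
    (hq : q ∈ I) (hH : H ∈ A \ I) (hpq : p ≠ q) {α β : ℝ} (hα : 0 < α) (hβ : 0 < β)
    (hHpq : α • p + β • q = H) :
    ∃ v : V n → SignType, IsCircuit A v ∧
      {h | v h = 1}.ncard = 2 ∧ {h | v h = -1}.ncard = 1 ∧
      {h | v h = 1} ⊆ (I : Set (V n)) ∧
      {h | v h = -1} ⊆ ((A \ I : Finset (V n)) : Set (V n)) := by
  obtain ⟨hHA, hHI⟩ := Finset.mem_sdiff.1 hH
  have hpH : p ≠ H := by rintro rfl; exact hHI hp
  have hqH : q ≠ H := by rintro rfl; exact hHI hq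
  refine ⟨twoPosOneNeg p q H,
    isCircuit_twoPosOneNeg hA hx₀ (hIA hp) (hIA hq) hHA hpq hα hβ hHpq, ?_, ?_, ?_, ?_⟩
  · simp_rw [twoPosOneNeg_eq_one_iff hpH hqH]
    exact Set.ncard_pair hpq
  · simp_rw [twoPosOneNeg_eq_neg_one_iff, Set.ofPred_eq_eq_singleton, Set.ncard_singleton]
  · intro h hh
    rcases (twoPosOneNeg_eq_one_iff hpH hqH).1 hh with rfl | rfl <;> assumption
  · intro h hh
    rw [twoPosOneNeg_eq_neg_one_iff.1 hh]
    simpa using hH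

theorem twoClosed_iff_no_small_circuit {n : ℕ} (A : Finset (V n)) (hA : IsArrangement A)
    (hc₀ : IsChamber A (fun _ => true)) (I : Finset (V n)) (hIA : I ⊆ A) :
    Is2Closed A (fun _ => true) I ↔
      ¬ ∃ v : V n → SignType, IsCircuit A v ∧
        {h | v h = 1}.ncard = 2 ∧ {h | v h = -1}.ncard = 1 ∧
        {h | v h = 1} ⊆ (I : Set (V n)) ∧
        {h | v h = -1} ⊆ ((A \ I : Finset (V n)) : Set (V n)) := by
  obtain ⟨x₀, hx₀⟩ := hc₀
  replace hx₀ : ∀ h ∈ A, 0 < h ⬝ᵥ x₀ := fun h hh => by simpa using hx₀ h hh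
  constructor
  · rintro h2 ⟨v, hv, hpos, hneg, hposI, hnegI⟩
    obtain ⟨p, q, hpq, hP⟩ := Set.ncard_eq_two.1 hpos
    obtain ⟨H, hN⟩ := Set.ncard_eq_one.1 hneg
    have hH : H ∈ A \ I := by simpa using hnegI (hN ▸ rfl : H ∈ {h | v h = -1})
    obtain ⟨x, hpx, hqx, hHx⟩ := h2.exists_dot_pos_pos_neg hA hIA hx₀
      (hposI (hP ▸ Set.mem_insert p {q})) (hposI (hP ▸ Set.mem_insert_of_mem p rfl)) hpq hH
    exact hv.2.2.1 (feasible_of_dot_pos_pos_neg hP hN hpx hqx hHx)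
  · intro hno u w ⟨_, _, huw⟩
    refine isConvex_loc_of_forall_smul_add_smul_ne hA hx₀ huw Finset.inter_subset_right ?_
    intro H hH p hp q hq hpq α β hα hβ hHpq
    obtain ⟨hHL, hHI⟩ := Finset.mem_sdiff.1 hH
    refine hno (exists_circuit_of_smul_add_smul_eq hA hIA hx₀ (Finset.mem_inter.1 hp).1
      (Finset.mem_inter.1 hq).1 (Finset.mem_sdiff.2 ⟨Finset.filter_subset _ _ hHL, ?_⟩)
      hpq hα hβ hHpq)
    exact fun hHI' => hHI (Finset.mem_inter.2 ⟨hHI', hHL⟩)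
end

section
/- Let H₁,...,H_N be an admissible permutation of a real central hyperplane arrangement A with fundamental chamber c₀. Suppose the hyperplanes containing some codimension-2 intersection subspace X form a contiguous subsequence H_i, H_{i+1}, ..., H_j. Then the permutation obtained by reversing this subsequence, H₁,...,H_{i−1}, H_j,...,H_i, H_{j+1},...,H_N, is also admissible. -/
open Matrix
open scoped Classical

/-! Fix a rank-2 localization `A_Y` and a gallery realizing its order under `H`. If at most one
hyperplane of `A_Y` lies in the contiguous block `A_X = loc A u w`, reversing the block does not
change the relative order of the hyperplanes of `A_Y`, so the same gallery still works. Otherwise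
two distinct hyperplanes of `A_Y` lie in `A_X`; as they determine the rank-2 localization,
`A_Y ⊆ A_X`, the order on `A_Y` is reversed, and it is realized by the reversed gallery of
opposite chambers, which again runs from `c₀` to `-c₀`. -/

theorem span_pair_eq_of_linearIndependent {K E : Type*} [Field K] [AddCommGroup E] [Module K E]
    {u w v₁ v₂ : E} (hli : LinearIndependent K ![v₁, v₂])
    (h₁ : v₁ ∈ Submodule.span K {u, w}) (h₂ : v₂ ∈ Submodule.span K {u, w}) :
    Submodule.span K {v₁, v₂} = Submodule.span K {u, w} := by
  have hle : Submodule.span K {v₁, v₂} ≤ Submodule.span K {u, w} := by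
    rw [Submodule.span_le]
    rintro x (rfl | rfl) <;> assumption
  rw [← range_cons_cons_empty u w ![], ← range_cons_cons_empty v₁ v₂ ![]] at hle ⊢
  have := FiniteDimensional.span_of_finite K (Set.finite_range ![u, w])
  refine Submodule.eq_of_le_of_finrank_le hle ?_
  rw [finrank_span_eq_card hli]
  exact finrank_range_le_card _

theorem mem_span_pair_iff_forall_dotProduct_eq_zero {n : ℕ} {u w v : V n} :
    v ∈ Submodule.span ℝ {u, w} ↔ ∀ x, u ⬝ᵥ x = 0 → w ⬝ᵥ x = 0 → v ⬝ᵥ x = 0 := by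
  constructor
  · rintro hv x hu hw
    obtain ⟨a, b, rfl⟩ := Submodule.mem_span_pair.mp hv
    simp [add_dotProduct, smul_dotProduct, hu, hw]
  · intro h
    let e := dotProductEquiv ℝ (Fin n)
    have hker : ⨅ k, LinearMap.ker (![e u, e w] k) ≤ LinearMap.ker (e v) := by
      intro x hx
      simp only [Submodule.mem_iInf, Fin.forall_fin_two, LinearMap.mem_ker] at hx
      simpa [e] using h x (by simpa [e] using hx.1) (by simpa [e] using hx.2)
    have hspan := mem_span_of_iInf_ker_le_ker hker
    rw [range_cons_cons_empty, ← Set.image_pair, ← LinearEquiv.coe_coe, Submodule.span_image,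
      Submodule.mem_map_equiv] at hspan
    simpa using hspan

theorem mem_loc_iff {n : ℕ} {A : Finset (V n)} {u w v : V n} :
    v ∈ loc A u w ↔ v ∈ A ∧ v ∈ Submodule.span ℝ {u, w} := by
  simp [loc, mem_span_pair_iff_forall_dotProduct_eq_zero]

theorem IsArrangement.linearIndependent_pair_s11 {n : ℕ} {A : Finset (V n)} (hA : IsArrangement A)
    {v₁ v₂ : V n} (h₁ : v₁ ∈ A) (h₂ : v₂ ∈ A) (hne : v₁ ≠ v₂) :
    LinearIndependent ℝ ![v₁, v₂] := by
  rw [LinearIndependent.pair_iff' (hA.1 v₁ h₁)]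
  rintro a rfl
  have ha : a ≠ 0 := by
    rintro rfl
    exact hA.1 _ h₂ (zero_smul _ _)
  exact hne (hA.2 _ h₁ _ h₂ fun x => by simp [smul_dotProduct, ha])

/-- Two distinct hyperplanes of a rank-2 localization determine it. -/
theorem IsArrangement.loc_subset_loc {n : ℕ} {A : Finset (V n)} (hA : IsArrangement A)
    {u w u' w' v₁ v₂ : V n} (hne : v₁ ≠ v₂) (h₁ : v₁ ∈ loc A u' w') (h₂ : v₂ ∈ loc A u' w')
    (h₁' : v₁ ∈ loc A u w) (h₂' : v₂ ∈ loc A u w) :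
    loc A u' w' ⊆ loc A u w := by
  simp only [mem_loc_iff] at h₁ h₂ h₁' h₂'
  have hspan : Submodule.span ℝ {u', w'} ≤ Submodule.span ℝ {u, w} := by
    rw [← span_pair_eq_of_linearIndependent (hA.linearIndependent_pair_s11 h₁.1 h₂.1 hne) h₁.2 h₂.2,
      Submodule.span_le]
    rintro x (rfl | rfl)
    exacts [h₁'.2, h₂'.2]
  intro v hv
  rw [mem_loc_iff] at hv ⊢
  exact ⟨hv.1, hspan hv.2⟩

section Gallery

variable {n M : ℕ} {L : Finset (V n)} {c₀ : V n → Bool} {G : Fin M → V n}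
  {e : Fin (M + 1) → V n → Bool}

theorem IsGallery.mem (hg : IsGallery L c₀ G e) (k : Fin M) : G k ∈ L := by
  have hk : G k ∈ SepSet L (e k.castSucc) (e k.succ) := by
    rw [hg.2.2.2 k]
    exact Finset.mem_singleton_self _
  exact Finset.mem_of_mem_filter _ hk

/-- Off `L` the reversed chambers take the signs of `c₀`, so that the reversed gallery
starts at `c₀` as a function on all of `V n`. -/
theorem IsGallery.rev (hg : IsGallery L c₀ G e) :
    IsGallery L c₀ (fun k => G k.rev) (fun k v => if v ∈ L then !e k.rev v else c₀ v) := by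
  obtain ⟨hch, h0, hlast, hsep⟩ := hg
  refine ⟨fun k => ?_, ?_, fun v hv => by simp [hv, h0], fun k => ?_⟩
  · obtain ⟨x, hx⟩ := hch k.rev
    refine ⟨-x, fun v hv => ?_⟩
    have := hx v hv
    cases e k.rev v <;> simp_all [dotProduct_neg]
  · funext v
    by_cases hv : v ∈ L <;> simp [hv, hlast]
  · rw [← hsep k.rev]
    refine Finset.filter_congr fun v hv => ?_
    simp [hv, Fin.rev_castSucc, Fin.rev_succ, ne_comm]

end Gallery

section FlipBlock

variable {N : ℕ} (i j : Fin N)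

def flipBlock (k : Fin N) : Fin N :=
  if h : (i : ℕ) ≤ (k : ℕ) ∧ (k : ℕ) ≤ (j : ℕ) then
    ⟨(i : ℕ) + (j : ℕ) - (k : ℕ), (by omega : (i : ℕ) + j - k ≤ j).trans_lt j.isLt⟩
  else k

theorem val_flipBlock (k : Fin N) :
    (flipBlock i j k : ℕ) =
      if (i : ℕ) ≤ (k : ℕ) ∧ (k : ℕ) ≤ (j : ℕ) then (i : ℕ) + (j : ℕ) - (k : ℕ) else (k : ℕ) := by
  unfold flipBlock
  split_ifs <;> rfl

@[simp]
theorem flipBlock_flipBlock (k : Fin N) : flipBlock i j (flipBlock i j k) = k := by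
  rw [Fin.ext_iff, val_flipBlock, val_flipBlock]
  split_ifs <;> omega

variable {i j}

theorem flipBlock_lt_flipBlock {a b : Fin N} (hab : a < b)
    (h : ¬ (((i : ℕ) ≤ a ∧ (a : ℕ) ≤ j) ∧ ((i : ℕ) ≤ b ∧ (b : ℕ) ≤ j))) :
    flipBlock i j a < flipBlock i j b := by
  rw [Fin.lt_def] at hab
  rw [Fin.lt_def, val_flipBlock, val_flipBlock]
  split_ifs <;> omega

theorem flipBlock_lt_flipBlock_of_mem {a b : Fin N} (hab : a < b)
    (ha : (i : ℕ) ≤ a ∧ (a : ℕ) ≤ j) (hb : (i : ℕ) ≤ b ∧ (b : ℕ) ≤ j) :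
    flipBlock i j b < flipBlock i j a := by
  rw [Fin.lt_def] at hab
  rw [Fin.lt_def, val_flipBlock, val_flipBlock, if_pos ha, if_pos hb]
  omega

end FlipBlock

theorem Admissible.comp_flipBlock {n N : ℕ} {A : Finset (V n)} (hA : IsArrangement A)
    {c₀ : V n → Bool} {H : Fin N → V n} (hinj : Function.Injective H)
    (hadm : Admissible A c₀ H) {u w : V n} {i j : Fin N}
    (hcontig : ∀ k : Fin N, H k ∈ loc A u w ↔ ((i : ℕ) ≤ k ∧ (k : ℕ) ≤ j)) :
    Admissible A c₀ (H ∘ flipBlock i j) := by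
  intro u' w' huw'
  obtain ⟨M, G, e, φ, hgal, hφ, hGH⟩ := hadm u' w' huw'
  have hH : ∀ k, H k = (H ∘ flipBlock i j) (flipBlock i j k) := by simp
  by_cases hsub : loc A u' w' ⊆ loc A u w
  · have hblock : ∀ k, (i : ℕ) ≤ φ k ∧ (φ k : ℕ) ≤ j :=
      fun k => (hcontig _).1 (hGH k ▸ hsub (hgal.mem k))
    refine ⟨M, _, _, fun k => flipBlock i j (φ k.rev), hgal.rev, fun k k' hkk' => ?_,
      fun k => (hGH _).trans (hH _)⟩
    exact flipBlock_lt_flipBlock_of_mem (hφ (Fin.rev_lt_rev.mpr hkk')) (hblock _) (hblock _)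
  · have hsingle : ∀ k k', (i : ℕ) ≤ φ k ∧ (φ k : ℕ) ≤ j → (i : ℕ) ≤ φ k' ∧ (φ k' : ℕ) ≤ j →
        k = k' := by
      intro k k' hk hk'
      by_contra hne
      refine hsub (hA.loc_subset_loc ?_ (hgal.mem k) (hgal.mem k') ?_ ?_)
      · rw [hGH, hGH]
        exact hinj.ne (hφ.injective.ne hne)
      · exact hGH k ▸ (hcontig _).2 hk
      · exact hGH k' ▸ (hcontig _).2 hk'
    refine ⟨M, G, e, flipBlock i j ∘ φ, hgal, fun k k' hkk' => ?_, fun k => (hGH k).trans (hH _)⟩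
    exact flipBlock_lt_flipBlock (hφ hkk') fun h => hkk'.ne (hsingle k k' h.1 h.2)

theorem admissible_flip {n N : ℕ} (A : Finset (V n)) (hA : IsArrangement A)
    (c₀ : V n → Bool) (H : Fin N → V n)
    (hinj : Function.Injective H)
    (hadm : Admissible A c₀ H)
    (u w : V n) (i j : Fin N)
    (hcontig : ∀ k : Fin N, H k ∈ loc A u w ↔ ((i : ℕ) ≤ k ∧ (k : ℕ) ≤ j)) :
    Admissible A c₀ (fun k : Fin N =>
      if h : (i : ℕ) ≤ (k : ℕ) ∧ (k : ℕ) ≤ (j : ℕ) then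
        H ⟨(i : ℕ) + (j : ℕ) - (k : ℕ), by have hj := j.isLt; omega⟩
      else H k) := by
  convert hadm.comp_flipBlock hA hinj hcontig using 1
  funext k
  exact (apply_dite H _ _ _).symm
end
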